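/- Fix a partition m = (m_1 ≥ ... ≥ m_k > 0) with the operators φ_ℓ as defined. Then ∑_{ℓ=0}^{k} ∑_{0 ≤ i_1 < ... < i_ℓ ≤ k-1} ∏_{j=1}^{k} ((φ_{i_1} ∘ ... ∘ φ_{i_ℓ}(m))_j + 1) = ∏_{j=1}^{k} (2 m_j + 1), where each entry n of the modified partition contributes the sl_2-dimension n+1. -/

import Mathlib

/-- The operator `φ_ℓ` on a tuple `m : ℕ → ℕ` (with respect to length `k`):
subtract `1` at position `p = min{q : ℓ+1 ≤ q ≤ k ∧ m q > m (q+1)}`. -/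
noncomputable def phiOp (k ℓ : ℕ) (m : ℕ → ℕ) : ℕ → ℕ :=
  fun j => if j = sInf {q | ℓ + 1 ≤ q ∧ q ≤ k ∧ m (q + 1) < m q} then m j - 1 else m j

/-- The composition `φ_{i_1} ∘ ⋯ ∘ φ_{i_ℓ}` over a subset `I = {i_1 < ... < i_ℓ}`,
with the smallest index applied last. -/
noncomputable def phiComp (k : ℕ) (I : Finset ℕ) (m : ℕ → ℕ) : ℕ → ℕ :=
  (I.sort (· ≤ ·)).foldr (fun i f => phiOp k i f) m

lemma phiOp_le (k i : ℕ) (n : ℕ → ℕ) (j : ℕ) : phiOp k i n j ≤ n j := by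
  unfold phiOp; split <;> omega

lemma phiOp_eq_of (k i : ℕ) (n : ℕ → ℕ) (j : ℕ) (h1 : 1 ≤ j) (h : j ≤ i ∨ k < j) :
    phiOp k i n j = n j := by
  unfold phiOp
  rw [if_neg]
  intro hj
  rcases Set.eq_empty_or_nonempty {q | i + 1 ≤ q ∧ q ≤ k ∧ n (q + 1) < n q} with he | hne
  · rw [he, Nat.sInf_empty] at hj; omega
  · have hm := Nat.sInf_mem hne
    rw [← hj] at hm
    obtain ⟨h2, h3, _⟩ := hm
    omega

lemma phiComp_empty (k : ℕ) (m : ℕ → ℕ) : phiComp k ∅ m = m := by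
  unfold phiComp; simp

lemma sort_max_append (I : Finset ℕ) (M : ℕ) (hM : M ∈ I) (hmax : ∀ x ∈ I, x ≤ M) :
    I.sort (· ≤ ·) = (I.erase M).sort (· ≤ ·) ++ [M] := by
  refine (fun hp hs => List.Perm.eq_of_pairwise' (Finset.pairwise_sort _ _) hs hp) ?_ ?_
  · rw [← Multiset.coe_eq_coe, ← Multiset.coe_add, Finset.sort_eq, Finset.sort_eq,
      Finset.erase_val]
    have h2 : M ::ₘ I.val.erase M = I.val := Multiset.cons_erase hM
    calc (I.val : Multiset ℕ) = M ::ₘ I.val.erase M := h2.symm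
      _ = I.val.erase M + ↑([M] : List ℕ) := by
          have : (↑([M] : List ℕ) : Multiset ℕ) = {M} := rfl
          rw [this, add_comm]
          rfl
  · rw [List.pairwise_append]
    refine ⟨Finset.pairwise_sort _ _, List.pairwise_singleton _ _, ?_⟩
    intro x hx y hy
    rw [List.mem_singleton] at hy
    subst hy
    exact hmax x (Finset.mem_of_mem_erase ((Finset.mem_sort _).mp hx))

lemma phiComp_erase (k : ℕ) (I : Finset ℕ) (M : ℕ) (hM : M ∈ I) (hmax : ∀ x ∈ I, x ≤ M)
    (m : ℕ → ℕ) : phiComp k I m = phiComp k (I.erase M) (phiOp k M m) := by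
  unfold phiComp
  rw [sort_max_append I M hM hmax, List.foldr_append]
  rfl

lemma phiComp_le (k : ℕ) : ∀ (N : ℕ) (I : Finset ℕ), I.card ≤ N →
    ∀ (n : ℕ → ℕ) (j : ℕ), phiComp k I n j ≤ n j := by
  intro N
  induction N with
  | zero =>
    intro I hI n j
    have : I = ∅ := Finset.card_eq_zero.mp (Nat.le_zero.mp hI)
    subst this
    rw [phiComp_empty]
  | succ N ih =>
    intro I hI n j
    rcases I.eq_empty_or_nonempty with rfl | hne
    · rw [phiComp_empty]
    · rw [phiComp_erase k I (I.max' hne) (I.max'_mem hne) (fun x hx => Finset.le_max' I x hx)]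
      refine le_trans (ih _ ?_ _ _) (phiOp_le _ _ _ _)
      rw [Finset.card_erase_of_mem (I.max'_mem hne)]
      omega

lemma tail_untouched (k c : ℕ) : ∀ (N : ℕ) (I : Finset ℕ), I.card ≤ N →
    I ⊆ Finset.Ico c k → ∀ (n : ℕ → ℕ) (j : ℕ), 1 ≤ j → (j ≤ c ∨ k < j) →
    phiComp k I n j = n j := by
  intro N
  induction N with
  | zero =>
    intro I hI _ n j _ _
    have : I = ∅ := Finset.card_eq_zero.mp (Nat.le_zero.mp hI)
    subst this
    rw [phiComp_empty]
  | succ N ih =>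
    intro I hI hsub n j h1 h2
    rcases I.eq_empty_or_nonempty with rfl | hne
    · rw [phiComp_empty]
    · have hMmem := I.max'_mem hne
      have hMc : c ≤ I.max' hne := (Finset.mem_Ico.mp (hsub hMmem)).1
      rw [phiComp_erase k I (I.max' hne) hMmem (fun x hx => Finset.le_max' I x hx)]
      rw [ih _ (by rw [Finset.card_erase_of_mem hMmem]; omega)
        (fun x hx => hsub (Finset.mem_of_mem_erase hx)) _ _ h1 h2]
      exact phiOp_eq_of _ _ _ _ h1 (by omega)

lemma phiComp_union (k : ℕ) : ∀ (N : ℕ) (I₂ : Finset ℕ), I₂.card ≤ N →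
    ∀ (I₁ : Finset ℕ), (∀ x ∈ I₁, ∀ y ∈ I₂, x < y) → ∀ (m : ℕ → ℕ),
    phiComp k (I₁ ∪ I₂) m = phiComp k I₁ (phiComp k I₂ m) := by
  intro N
  induction N with
  | zero =>
    intro I₂ hI _ _ _
    have : I₂ = ∅ := Finset.card_eq_zero.mp (Nat.le_zero.mp hI)
    subst this
    rw [Finset.union_empty, phiComp_empty]
  | succ N ih =>
    intro I₂ hI I₁ hlt m
    rcases I₂.eq_empty_or_nonempty with rfl | hne
    · rw [Finset.union_empty, phiComp_empty]
    · set M := I₂.max' hne with hMdef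
      have hMmem : M ∈ I₂ := I₂.max'_mem hne
      have hMnotin : M ∉ I₁ := fun h => lt_irrefl M (hlt M h M hMmem)
      have hmaxU : ∀ x ∈ I₁ ∪ I₂, x ≤ M := by
        intro x hx
        rcases Finset.mem_union.mp hx with h | h
        · exact le_of_lt (hlt x h M hMmem)
        · exact Finset.le_max' _ x h
      rw [phiComp_erase k (I₁ ∪ I₂) M (Finset.mem_union_right _ hMmem) hmaxU]
      rw [Finset.erase_union_distrib, Finset.erase_eq_of_notMem hMnotin]
      rw [ih (I₂.erase M) (by rw [Finset.card_erase_of_mem hMmem]; omega) I₁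
        (fun x hx y hy => hlt x hx y (Finset.mem_of_mem_erase hy)) _]
      rw [← phiComp_erase k I₂ M hMmem (fun x hx => Finset.le_max' _ x hx)]

lemma block_lemma (k : ℕ) : ∀ (N : ℕ) (I : Finset ℕ), I.card ≤ N →
    ∀ (a c v : ℕ) (w : ℕ → ℕ), I ⊆ Finset.Ico a (a + c) → a + c ≤ k →
    (∀ j, a + 1 ≤ j → j ≤ a + c → w j = v) → w (a + c + 1) < v →
    ∀ j, 1 ≤ j →
    phiComp k I w j = if a + c + 1 ≤ j + I.card ∧ j ≤ a + c then v - 1 else w j := by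
  intro N
  induction N with
  | zero =>
    intro I hI a c v w _ _ _ _ j _
    have : I = ∅ := Finset.card_eq_zero.mp (Nat.le_zero.mp hI)
    subst this
    rw [phiComp_empty, if_neg (by simp only [Finset.card_empty]; omega)]
  | succ N ih =>
    intro I hI a c v w hsub hck hblock hlt j hj
    rcases I.eq_empty_or_nonempty with rfl | hne
    · rw [phiComp_empty, if_neg (by simp only [Finset.card_empty]; omega)]
    · set M := I.max' hne with hMdef
      have hMmem : M ∈ I := I.max'_mem hne
      have hMico := Finset.mem_Ico.mp (hsub hMmem)
      have hc1 : 1 ≤ c := by omega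
      obtain ⟨c₀, rfl⟩ : ∃ c₀, c = c₀ + 1 := ⟨c - 1, by omega⟩
      have hv1 : 1 ≤ v := by omega
      have hwac : w (a + (c₀ + 1)) = v := hblock _ (by omega) (by omega)
      have hSinf : sInf {q | M + 1 ≤ q ∧ q ≤ k ∧ w (q + 1) < w q} = a + (c₀ + 1) := by
        have hmem : a + (c₀ + 1) ∈ {q | M + 1 ≤ q ∧ q ≤ k ∧ w (q + 1) < w q} := by
          refine ⟨by omega, by omega, ?_⟩
          rw [hwac]
          have : a + (c₀ + 1) + 1 = a + (c₀ + 1 + 1) := by omega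
          rw [this] at hlt ⊢
          exact hlt
        have hlb : ∀ x ∈ {q | M + 1 ≤ q ∧ q ≤ k ∧ w (q + 1) < w q}, a + (c₀ + 1) ≤ x := by
          intro x hx
          obtain ⟨hx1, hx2, hx3⟩ := hx
          by_contra hcon
          push_neg at hcon
          have e1 : w x = v := hblock x (by omega) (by omega)
          have e2 : w (x + 1) = v := hblock (x + 1) (by omega) (by omega)
          omega
        exact le_antisymm (Nat.sInf_le hmem) (hlb _ (Nat.sInf_mem ⟨_, hmem⟩))
      rw [phiComp_erase k I M hMmem (fun x hx => Finset.le_max' I x hx)]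
      have hw' : phiOp k M w = fun j => if j = a + (c₀ + 1) then w j - 1 else w j := by
        funext j'
        unfold phiOp
        rw [hSinf]
      rw [hw']
      have hcard : 1 ≤ I.card := Finset.card_pos.mpr hne
      have hcards : (I.erase M).card = I.card - 1 := Finset.card_erase_of_mem hMmem
      have hkey := ih (I.erase M) (by omega) a c₀ v
        (fun j => if j = a + (c₀ + 1) then w j - 1 else w j)
        (by intro x hx
            have hxI := Finset.mem_of_mem_erase hx
            have hxM : x ≤ M := Finset.le_max' I x hxI
            have hxne : x ≠ M := Finset.ne_of_mem_erase hx
            have := Finset.mem_Ico.mp (hsub hxI)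
            exact Finset.mem_Ico.mpr ⟨by omega, by omega⟩)
        (by omega)
        (by intro j' h1 h2
            rw [if_neg (by omega)]
            exact hblock j' h1 (by omega))
        (by rw [if_pos (by omega)]
            have : w (a + c₀ + 1) = v := hblock _ (by omega) (by omega)
            omega)
      rw [hkey j hj, hcards]
      by_cases hj2 : j = a + (c₀ + 1)
      · subst hj2
        rw [if_neg (by omega), if_pos (by omega)]
        rw [hblock _ (by omega) (by omega), if_pos (by omega)]
      · by_cases hcond : a + c₀ + 1 ≤ j + (I.card - 1) ∧ j ≤ a + c₀
        · rw [if_pos hcond, if_pos (by omega)]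
        · rw [if_neg hcond, if_neg (by omega)]
          rw [if_neg (by omega)]

lemma sum_powerset_union {s t : Finset ℕ} (h : Disjoint s t) (f : Finset ℕ → ℕ) :
    ∑ u ∈ (s ∪ t).powerset, f u = ∑ u₁ ∈ s.powerset, ∑ u₂ ∈ t.powerset, f (u₁ ∪ u₂) := by
  rw [← Finset.sum_product']
  refine Finset.sum_bij' (fun u _ => (u ∩ s, u ∩ t)) (fun p _ => p.1 ∪ p.2) ?_ ?_ ?_ ?_ ?_
  · intro u hu
    rw [Finset.mem_powerset] at hu
    rw [Finset.mem_product, Finset.mem_powerset, Finset.mem_powerset]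
    exact ⟨Finset.inter_subset_right, Finset.inter_subset_right⟩
  · intro p hp
    rw [Finset.mem_product, Finset.mem_powerset, Finset.mem_powerset] at hp
    rw [Finset.mem_powerset]
    exact Finset.union_subset_union hp.1 hp.2
  · intro u hu
    rw [Finset.mem_powerset] at hu
    show u ∩ s ∪ u ∩ t = u
    rw [← Finset.inter_union_distrib_left, Finset.inter_eq_left.mpr hu]
  · intro p hp
    rw [Finset.mem_product, Finset.mem_powerset, Finset.mem_powerset] at hp
    show ((p.1 ∪ p.2) ∩ s, (p.1 ∪ p.2) ∩ t) = p
    have h1 : (p.1 ∪ p.2) ∩ s = p.1 := by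
      rw [Finset.union_inter_distrib_right, Finset.inter_eq_left.mpr hp.1,
        (Finset.disjoint_iff_inter_eq_empty.mp ((h.symm.mono_left hp.2))), Finset.union_empty]
    have h2 : (p.1 ∪ p.2) ∩ t = p.2 := by
      rw [Finset.union_inter_distrib_right, Finset.inter_eq_left.mpr hp.2,
        (Finset.disjoint_iff_inter_eq_empty.mp ((h.mono_left hp.1))), Finset.empty_union]
    exact Prod.ext h1 h2
  · intro u hu
    rw [Finset.mem_powerset] at hu
    show f u = f (u ∩ s ∪ u ∩ t)
    rw [← Finset.inter_union_distrib_left, Finset.inter_eq_left.mpr hu]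

theorem genThm : ∀ (len : ℕ), ∀ (a : ℕ) (m : ℕ → ℕ), (∀ q, m (q + 1) ≤ m q) →
    m (a + len + 1) < m (a + len) →
    ∑ I ∈ (Finset.Ico a (a + len)).powerset,
        ∏ j ∈ Finset.Icc (a + 1) (a + len), (phiComp (a + len) I m j + 1)
      = ∏ j ∈ Finset.Icc (a + 1) (a + len), (2 * m j + 1) := by
  intro len
  induction len using Nat.strong_induction_on with
  | _ len IH =>
  intro a m hdec hlast
  rcases Nat.eq_zero_or_pos len with rfl | hlen
  · rw [Nat.add_zero, Finset.Ico_self, Finset.Icc_eq_empty (by omega)]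
    simp
  have hmono : ∀ p q, p ≤ q → m q ≤ m p := by
    intro p q hpq
    obtain ⟨d, rfl⟩ := Nat.exists_eq_add_of_le hpq
    clear hpq
    induction d with
    | zero => rw [Nat.add_zero]
    | succ d ihd => exact le_trans (by rw [← Nat.add_assoc]; exact hdec (p + d)) ihd
  set K := a + len with hK
  set v := m (a + 1) with hv
  set b := Nat.findGreatest (fun j => m (a + j) = v) len with hbdef
  have hb1 : 1 ≤ b :=
    Nat.le_findGreatest (P := fun j => m (a + j) = v) hlen (by rw [hv])
  have hble : b ≤ len := Nat.findGreatest_le len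
  have hmb : m (a + b) = v :=
    Nat.findGreatest_spec (P := fun j => m (a + j) = v) (m := 1) hlen (by rw [hv])
  have hblock : ∀ j, a + 1 ≤ j → j ≤ a + b → m j = v := by
    intro j h1 h2
    have e1 := hmono (a + 1) j h1
    have e2 := hmono j (a + b) h2
    omega
  have hnext : m (a + b + 1) < v := by
    rcases eq_or_lt_of_le hble with heq | hltb
    · have e1 : a + b = K := by omega
      rw [e1]
      have : m K = v := by rw [← e1, hmb]
      omega
    · have hng : ¬ (m (a + (b + 1)) = v) :=
        Nat.findGreatest_is_greatest (P := fun j => m (a + j) = v) (n := len)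
          (by omega) (by omega)
      have := hmono (a + 1) (a + b + 1) (by omega)
      have e : a + (b + 1) = a + b + 1 := by omega
      rw [e] at hng
      omega
  have hv1 : 1 ≤ v := by omega
  -- split the index set
  have hunion : Finset.Ico a (a + b) ∪ Finset.Ico (a + b) K = Finset.Ico a K :=
    Finset.Ico_union_Ico_eq_Ico (by omega) (by omega)
  have hdisj : Disjoint (Finset.Ico a (a + b)) (Finset.Ico (a + b) K) :=
    Finset.Ico_disjoint_Ico_consecutive a (a + b) K
  rw [← hunion, sum_powerset_union hdisj]
  have key : ∀ I₁ ∈ (Finset.Ico a (a + b)).powerset, ∀ I₂ ∈ (Finset.Ico (a + b) K).powerset,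
      ∏ j ∈ Finset.Icc (a + 1) K, (phiComp K (I₁ ∪ I₂) m j + 1)
      = ((v + 1) ^ (b - I₁.card) * v ^ I₁.card) *
        ∏ j ∈ Finset.Icc (a + b + 1) K, (phiComp K I₂ m j + 1) := by
    intro I₁ h1 I₂ h2
    rw [Finset.mem_powerset] at h1 h2
    have hcard1 : I₁.card ≤ b := by
      have := Finset.card_le_card h1
      rwa [Nat.card_Ico, Nat.add_sub_cancel_left] at this
    have hsplit : phiComp K (I₁ ∪ I₂) m = phiComp K I₁ (phiComp K I₂ m) := by
      refine phiComp_union K I₂.card I₂ le_rfl I₁ ?_ m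
      intro x hx y hy
      have hx' := Finset.mem_Ico.mp (h1 hx)
      have hy' := Finset.mem_Ico.mp (h2 hy)
      omega
    set w := phiComp K I₂ m with hw
    have hwm : ∀ j, 1 ≤ j → (j ≤ a + b ∨ K < j) → w j = m j :=
      fun j hj1 hj2 => tail_untouched K (a + b) I₂.card I₂ le_rfl h2 m j hj1 hj2
    have hwv : ∀ j, a + 1 ≤ j → j ≤ a + b → w j = v := by
      intro j hj1 hj2
      rw [hwm j (by omega) (Or.inl hj2)]
      exact hblock j hj1 hj2
    have hwlt : w (a + b + 1) < v :=
      lt_of_le_of_lt (phiComp_le K I₂.card I₂ le_rfl m (a + b + 1)) hnext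
    have hbl := block_lemma K I₁.card I₁ le_rfl a b v w h1 (by omega) hwv hwlt
    rw [hsplit, Finset.Icc_add_one_left_eq_Ioc,
      ← Finset.prod_Ioc_consecutive _ (show a ≤ a + b by omega) (show a + b ≤ K by omega)]
    have fac2 : ∏ j ∈ Finset.Ioc (a + b) K, (phiComp K I₁ w j + 1)
        = ∏ j ∈ Finset.Icc (a + b + 1) K, (phiComp K I₂ m j + 1) := by
      rw [Finset.Icc_add_one_left_eq_Ioc]
      refine Finset.prod_congr rfl ?_
      intro j hj
      have hj' := Finset.mem_Ioc.mp hj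
      rw [hbl j (by omega), if_neg (by omega)]
    have fac1 : ∏ j ∈ Finset.Ioc a (a + b), (phiComp K I₁ w j + 1)
        = (v + 1) ^ (b - I₁.card) * v ^ I₁.card := by
      have e1 : ∀ j ∈ Finset.Ioc a (a + b), phiComp K I₁ w j + 1
          = if a + b + 1 ≤ j + I₁.card then v else v + 1 := by
        intro j hj
        have hj' := Finset.mem_Ioc.mp hj
        rw [hbl j (by omega)]
        by_cases hcnd : a + b + 1 ≤ j + I₁.card
        · rw [if_pos ⟨hcnd, by omega⟩, if_pos hcnd]
          omega
        · rw [if_neg (by omega), if_neg hcnd, hwv j (by omega) (by omega)]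
      rw [Finset.prod_congr rfl e1,
        ← Finset.prod_Ioc_consecutive _ (show a ≤ a + (b - I₁.card) by omega)
          (show a + (b - I₁.card) ≤ a + b by omega)]
      have eA : ∏ j ∈ Finset.Ioc a (a + (b - I₁.card)),
          (if a + b + 1 ≤ j + I₁.card then v else v + 1) = (v + 1) ^ (b - I₁.card) := by
        have eA' : ∀ j ∈ Finset.Ioc a (a + (b - I₁.card)),
            (if a + b + 1 ≤ j + I₁.card then v else v + 1) = v + 1 := by
          intro j hj
          have := Finset.mem_Ioc.mp hj
          rw [if_neg (by omega)]
        rw [Finset.prod_congr rfl eA', Finset.prod_const, Nat.card_Ioc,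
          Nat.add_sub_cancel_left]
      have eB : ∏ j ∈ Finset.Ioc (a + (b - I₁.card)) (a + b),
          (if a + b + 1 ≤ j + I₁.card then v else v + 1) = v ^ I₁.card := by
        have eB' : ∀ j ∈ Finset.Ioc (a + (b - I₁.card)) (a + b),
            (if a + b + 1 ≤ j + I₁.card then v else v + 1) = v := by
          intro j hj
          have := Finset.mem_Ioc.mp hj
          rw [if_pos (by omega)]
        rw [Finset.prod_congr rfl eB', Finset.prod_const, Nat.card_Ioc]
        congr 1
        omega
      rw [eA, eB]
    rw [fac1, fac2]
  rw [Finset.sum_congr rfl (fun I₁ h1 => Finset.sum_congr rfl (fun I₂ h2 => key I₁ h1 I₂ h2))]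
  rw [← Finset.sum_mul_sum]
  have hsum2 : ∑ I₂ ∈ (Finset.Ico (a + b) K).powerset,
      ∏ j ∈ Finset.Icc (a + b + 1) K, (phiComp K I₂ m j + 1)
      = ∏ j ∈ Finset.Icc (a + b + 1) K, (2 * m j + 1) := by
    have e : a + b + (len - b) = K := by omega
    have hih := IH (len - b) (by omega) (a + b) m hdec (by rw [e]; exact hlast)
    rw [e] at hih
    exact hih
  have hsum1 : ∑ I₁ ∈ (Finset.Ico a (a + b)).powerset,
      (v + 1) ^ (b - I₁.card) * v ^ I₁.card = (2 * v + 1) ^ b := by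
    have hpa := Finset.prod_add (fun _ : ℕ => v) (fun _ : ℕ => v + 1) (Finset.Ico a (a + b))
    rw [Finset.prod_const, Nat.card_Ico, Nat.add_sub_cancel_left] at hpa
    have e2 : ∀ t ∈ (Finset.Ico a (a + b)).powerset,
        (∏ _i ∈ t, v) * ∏ _i ∈ Finset.Ico a (a + b) \ t, (v + 1)
        = (v + 1) ^ (b - t.card) * v ^ t.card := by
      intro t ht
      rw [Finset.mem_powerset] at ht
      rw [Finset.prod_const, Finset.prod_const, Finset.card_sdiff_of_subset ht, Nat.card_Ico,
        Nat.add_sub_cancel_left, Nat.mul_comm]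
    rw [Finset.sum_congr rfl e2] at hpa
    rw [← hpa]
    congr 1
    omega
  rw [hsum1, hsum2]
  have i1 : Finset.Icc (a + 1) K = Finset.Ioc a K := Finset.Icc_add_one_left_eq_Ioc a K
  have i2 : Finset.Icc (a + b + 1) K = Finset.Ioc (a + b) K := Finset.Icc_add_one_left_eq_Ioc (a + b) K
  rw [i1, i2, ← Finset.prod_Ioc_consecutive _ (show a ≤ a + b by omega)
    (show a + b ≤ K by omega)]
  congr 1
  have e3 : ∀ j ∈ Finset.Ioc a (a + b), 2 * m j + 1 = 2 * v + 1 := by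
    intro j hj
    have := Finset.mem_Ioc.mp hj
    rw [hblock j (by omega) (by omega)]
  rw [Finset.prod_congr rfl e3, Finset.prod_const, Nat.card_Ioc, Nat.add_sub_cancel_left]

/-- For a partition `m = (m_1 ≥ ... ≥ m_k > 0)`,
`∑_{I ⊆ {0,...,k-1}} ∏_{j=1}^k ((φ_{i_1}∘⋯∘φ_{i_ℓ}(m))_j + 1) = ∏_{j=1}^k (2 m_j + 1)`. -/
theorem fusion_flag_dimension_identity
    (k : ℕ) (hk : 1 ≤ k) (m : ℕ → ℕ)
    (hdec : ∀ q, m (q + 1) ≤ m q)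
    (hpos : ∀ q, 1 ≤ q → q ≤ k → 0 < m q)
    (hsupp : ∀ q, k < q → m q = 0) :
    ∑ I ∈ (Finset.range k).powerset, ∏ j ∈ Finset.Icc 1 k, (phiComp k I m j + 1)
      = ∏ j ∈ Finset.Icc 1 k, (2 * m j + 1) := by
  have h0 : m (0 + k + 1) < m (0 + k) := by
    have h1 := hpos k hk le_rfl
    have h2 := hsupp (k + 1) (by omega)
    simp only [Nat.zero_add]
    omega
  have hgen := genThm k 0 m hdec h0
  simp only [Nat.zero_add] at hgen
  rwa [Finset.range_eq_Ico]
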